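/- Let {φ(θ), θ ∈ T_0} be an admissible family of nonnegative random variables and for each stopping time S ∈ T_0 let v(S) = ess sup_{θ ∈ T_S} E[φ(θ) | F_S]. Then the family {v(S), S ∈ T_0} is itself admissible, i.e. (1) for every S ∈ T_0, v(S) is a nonnegative F_S-measurable random variable, and (2) for all S, S' ∈ T_0, v(S) = v(S') almost surely on the event {S = S'}. -/

import Mathlib

open MeasureTheory Filter Set Topology

variable {Ω : Type*}

/-- `τ` belongs to `T_0`: it is a stopping time of `𝓕` with values in `[0, T]`. -/
def MemT0 {m0 : MeasurableSpace Ω} (𝓕 : MeasureTheory.Filtration ℝ m0) (T : ℝ)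
    (τ : Ω → ℝ) : Prop :=
  MeasureTheory.IsStoppingTime 𝓕 (fun ω => (τ ω : WithTop ℝ)) ∧ ∀ ω, τ ω ∈ Set.Icc (0 : ℝ) T

/-- `v` is an essential supremum of the family `f i`, `i` ranging over `{i | P i}`:
it dominates every member a.s. and is a.s. below any other a.s. upper bound. -/
def IsEssSupFam {m0 : MeasurableSpace Ω} (μ : MeasureTheory.Measure Ω) {ι : Sort*}
    (P : ι → Prop) (f : ι → Ω → ℝ) (v : Ω → ℝ) : Prop :=
  (∀ i, P i → f i ≤ᵐ[μ] v) ∧ ∀ w : Ω → ℝ, (∀ i, P i → f i ≤ᵐ[μ] w) → v ≤ᵐ[μ] w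

/-- `v` is an essential infimum of the family `f i`, `i` ranging over `{i | P i}`. -/
def IsEssInfFam {m0 : MeasurableSpace Ω} (μ : MeasureTheory.Measure Ω) {ι : Sort*}
    (P : ι → Prop) (f : ι → Ω → ℝ) (v : Ω → ℝ) : Prop :=
  (∀ i, P i → v ≤ᵐ[μ] f i) ∧ ∀ w : Ω → ℝ, (∀ i, P i → w ≤ᵐ[μ] f i) → w ≤ᵐ[μ] v

/-- An admissible family of nonnegative random variables indexed by the stopping
times in `T_0`: `φ τ` is a nonnegative `F_τ`-measurable random variable, and
`φ τ = φ τ'` a.s. on `{τ = τ'}`. -/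
def Admissible {m0 : MeasurableSpace Ω} (𝓕 : MeasureTheory.Filtration ℝ m0) (T : ℝ)
    (μ : MeasureTheory.Measure Ω) (φ : (Ω → ℝ) → Ω → ℝ) : Prop :=
  (∀ τ (hτ : MemT0 𝓕 T τ),
      Measurable[hτ.1.measurableSpace] (φ τ) ∧ ∀ ω, 0 ≤ φ τ ω) ∧
  ∀ τ τ', MemT0 𝓕 T τ → MemT0 𝓕 T τ' →
    ∀ᵐ ω ∂μ, τ ω = τ' ω → φ τ ω = φ τ' ω

/-- An a.e. variant of admissibility (for families defined only up to a.s. equality,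
such as value-function families): `φ τ` is a.s. nonnegative and a.s. equal to some
`F_τ`-measurable random variable, and `φ τ = φ τ'` a.s. on `{τ = τ'}`. -/
def AdmissibleAE {m0 : MeasurableSpace Ω} (𝓕 : MeasureTheory.Filtration ℝ m0) (T : ℝ)
    (μ : MeasureTheory.Measure Ω) (φ : (Ω → ℝ) → Ω → ℝ) : Prop :=
  (∀ τ (hτ : MemT0 𝓕 T τ),
      (∀ᵐ ω ∂μ, 0 ≤ φ τ ω) ∧
      ∃ w : Ω → ℝ, Measurable[hτ.1.measurableSpace] w ∧ φ τ =ᵐ[μ] w) ∧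
  ∀ τ τ', MemT0 𝓕 T τ → MemT0 𝓕 T τ' →
    ∀ᵐ ω ∂μ, τ ω = τ' ω → φ τ ω = φ τ' ω

/-- A biadmissible family: `ψ τ S` is a nonnegative `F_{τ ∨ S}`-measurable random
variable, and `ψ τ S = ψ τ' S'` a.s. on `{τ = τ'} ∩ {S = S'}`. -/
def Biadmissible {m0 : MeasurableSpace Ω} (𝓕 : MeasureTheory.Filtration ℝ m0) (T : ℝ)
    (μ : MeasureTheory.Measure Ω) (ψ : (Ω → ℝ) → (Ω → ℝ) → Ω → ℝ) : Prop :=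
  (∀ τ S (hτ : MemT0 𝓕 T τ) (hS : MemT0 𝓕 T S),
      Measurable[(hτ.1.max hS.1).measurableSpace] (ψ τ S) ∧ ∀ ω, 0 ≤ ψ τ S ω) ∧
  ∀ τ τ' S S', MemT0 𝓕 T τ → MemT0 𝓕 T τ' → MemT0 𝓕 T S → MemT0 𝓕 T S' →
    ∀ᵐ ω ∂μ, τ ω = τ' ω → S ω = S' ω → ψ τ S ω = ψ τ' S' ω

/-- `θn ↓ θ` a.s.: the sequence is a.s. nonincreasing and converges a.s. to `θ`. -/
def DownAS {m0 : MeasurableSpace Ω} (μ : MeasureTheory.Measure Ω)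
    (θn : ℕ → Ω → ℝ) (θ : Ω → ℝ) : Prop :=
  ∀ᵐ ω ∂μ, (∀ n, θn (n + 1) ω ≤ θn n ω) ∧
    Filter.Tendsto (fun n => θn n ω) Filter.atTop (nhds (θ ω))

/-- `θn ↑ θ` a.s.: the sequence is a.s. nondecreasing and converges a.s. to `θ`. -/
def UpAS {m0 : MeasurableSpace Ω} (μ : MeasureTheory.Measure Ω)
    (θn : ℕ → Ω → ℝ) (θ : Ω → ℝ) : Prop :=
  ∀ᵐ ω ∂μ, (∀ n, θn n ω ≤ θn (n + 1) ω) ∧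
    Filter.Tendsto (fun n => θn n ω) Filter.atTop (nhds (θ ω))

/-- The family `φ` is right continuous along stopping times in expectation. -/
def RCE {m0 : MeasurableSpace Ω} (𝓕 : MeasureTheory.Filtration ℝ m0) (T : ℝ)
    (μ : MeasureTheory.Measure Ω) (φ : (Ω → ℝ) → Ω → ℝ) : Prop :=
  ∀ θ, MemT0 𝓕 T θ → ∀ θn : ℕ → Ω → ℝ, (∀ n, MemT0 𝓕 T (θn n)) → DownAS μ θn θ →
    Filter.Tendsto (fun n => ∫ ω, φ (θn n) ω ∂μ) Filter.atTop (nhds (∫ ω, φ θ ω ∂μ))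

/-- The family `φ` is left continuous along stopping times in expectation. -/
def LCE {m0 : MeasurableSpace Ω} (𝓕 : MeasureTheory.Filtration ℝ m0) (T : ℝ)
    (μ : MeasureTheory.Measure Ω) (φ : (Ω → ℝ) → Ω → ℝ) : Prop :=
  ∀ θ, MemT0 𝓕 T θ → ∀ θn : ℕ → Ω → ℝ, (∀ n, MemT0 𝓕 T (θn n)) → UpAS μ θn θ →
    Filter.Tendsto (fun n => ∫ ω, φ (θn n) ω ∂μ) Filter.atTop (nhds (∫ ω, φ θ ω ∂μ))

/-- The biadmissible family `ψ` is uniformly right continuous in expectation along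
stopping times: for `S_n ↓ S` a.s. (all in `T_0`), the expectation of the essential
supremum over `θ ∈ T_0` of `|ψ(θ, S) - ψ(θ, S_n)|` (resp. `|ψ(S, θ) - ψ(S_n, θ)|`)
tends to `0`. -/
def URCE {m0 : MeasurableSpace Ω} (𝓕 : MeasureTheory.Filtration ℝ m0) (T : ℝ)
    (μ : MeasureTheory.Measure Ω) (ψ : (Ω → ℝ) → (Ω → ℝ) → Ω → ℝ) : Prop :=
  ∀ S, MemT0 𝓕 T S → ∀ Sn : ℕ → Ω → ℝ, (∀ n, MemT0 𝓕 T (Sn n)) → DownAS μ Sn S →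
    (∀ D : ℕ → Ω → ℝ,
      (∀ n, IsEssSupFam μ (MemT0 𝓕 T) (fun θ ω => |ψ θ S ω - ψ θ (Sn n) ω|) (D n)) →
      Filter.Tendsto (fun n => ∫ ω, D n ω ∂μ) Filter.atTop (nhds 0)) ∧
    ∀ D : ℕ → Ω → ℝ,
      (∀ n, IsEssSupFam μ (MemT0 𝓕 T) (fun θ ω => |ψ S θ ω - ψ (Sn n) θ ω|) (D n)) →
      Filter.Tendsto (fun n => ∫ ω, D n ω ∂μ) Filter.atTop (nhds 0)

/-- The biadmissible family `ψ` is uniformly left continuous in expectation along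
stopping times. -/
def ULCE {m0 : MeasurableSpace Ω} (𝓕 : MeasureTheory.Filtration ℝ m0) (T : ℝ)
    (μ : MeasureTheory.Measure Ω) (ψ : (Ω → ℝ) → (Ω → ℝ) → Ω → ℝ) : Prop :=
  ∀ S, MemT0 𝓕 T S → ∀ Sn : ℕ → Ω → ℝ, (∀ n, MemT0 𝓕 T (Sn n)) → UpAS μ Sn S →
    (∀ D : ℕ → Ω → ℝ,
      (∀ n, IsEssSupFam μ (MemT0 𝓕 T) (fun θ ω => |ψ θ S ω - ψ θ (Sn n) ω|) (D n)) →
      Filter.Tendsto (fun n => ∫ ω, D n ω ∂μ) Filter.atTop (nhds 0)) ∧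
    ∀ D : ℕ → Ω → ℝ,
      (∀ n, IsEssSupFam μ (MemT0 𝓕 T) (fun θ ω => |ψ S θ ω - ψ (Sn n) θ ω|) (D n)) →
      Filter.Tendsto (fun n => ∫ ω, D n ω ∂μ) Filter.atTop (nhds 0)

/-! The family `{E[φ(θ) | F_S] : θ ∈ T_S}` is directed upwards: two stopping times can be pasted
along the `F_S`-set where one conditional expectation dominates the other. Hence its essential
supremum is the a.s. supremum of a countable subfamily, which makes `v(S)` `F_S`-measurable.
On `{S = S'}`, any `θ ∈ T_S` may be replaced by `θ ∨ S' ∈ T_{S'}` without changing `φ(θ)`, and there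
`F_S` and `F_{S'}` agree, so `v(S) ≤ v(S')` on that set; by symmetry the two are equal. -/

open Real

theorem Monotone.map_max_sub_map_le_of_le {α β : Type*} [LinearOrder α] [AddCommGroup β]
    [PartialOrder β] [IsOrderedAddMonoid β] {g : α → β} (hg : Monotone g) (x : α) {t t' : α}
    (h : t ≤ t') : g (max x t') - g t' ≤ g (max x t) - g t := by
  rcases le_total x t with hxt | hxt
  · simp [max_eq_right hxt, max_eq_right (hxt.trans h)]
  rcases le_total x t' with hxt' | hxt'
  · rw [max_eq_right hxt', max_eq_left hxt, sub_self, sub_nonneg]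
    exact hg hxt
  · rw [max_eq_left hxt', max_eq_left hxt]
    exact sub_le_sub_left (hg h) _

section EssSup

variable {m m0 : MeasurableSpace Ω} {μ : Measure Ω} {ι : Type*} {P : ι → Prop} {f : ι → Ω → ℝ}

theorem IsEssSupFam.ae_eq {v w : Ω → ℝ} (hv : IsEssSupFam μ P f v) (hw : IsEssSupFam μ P f w) :
    v =ᵐ[μ] w :=
  (hv.2 w hw.1).antisymm (hw.2 v hv.1)

theorem integrable_arctan_comp [IsFiniteMeasure μ] {g : Ω → ℝ} (hg : AEStronglyMeasurable g μ) :
    Integrable (fun ω => arctan (g ω)) μ :=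
  .of_bound (continuous_arctan.comp_aestronglyMeasurable hg) (π / 2) <| ae_of_all _ fun ω => by
    rw [norm_eq_abs, abs_le]
    exact ⟨(neg_pi_div_two_lt_arctan _).le, (arctan_lt_pi_div_two _).le⟩

theorem integral_arctan_max_sub_le [IsFiniteMeasure μ] {g w h : Ω → ℝ}
    (hg : AEStronglyMeasurable g μ) (hw : AEStronglyMeasurable w μ)
    (hh : AEStronglyMeasurable h μ) (hhw : h ≤ᵐ[μ] w) :
    ∫ ω, arctan (max (g ω) (w ω)) - arctan (w ω) ∂μ ≤
      ∫ ω, arctan (max (g ω) (h ω)) ∂μ - ∫ ω, arctan (h ω) ∂μ := by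
  have hgw : AEStronglyMeasurable (fun ω => max (g ω) (w ω)) μ := hg.sup hw
  have hgh : AEStronglyMeasurable (fun ω => max (g ω) (h ω)) μ := hg.sup hh
  rw [← integral_sub (integrable_arctan_comp hgh) (integrable_arctan_comp hh)]
  refine integral_mono_ae ((integrable_arctan_comp hgw).sub (integrable_arctan_comp hw))
    ((integrable_arctan_comp hgh).sub (integrable_arctan_comp hh)) ?_
  filter_upwards [hhw] with ω hω
  exact arctan_strictMono.monotone.map_max_sub_map_le_of_le _ hω

theorem ae_le_of_integral_arctan_max_sub_nonpos [IsFiniteMeasure μ] {g w : Ω → ℝ}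
    (hg : AEStronglyMeasurable g μ) (hw : AEStronglyMeasurable w μ)
    (h : ∫ ω, arctan (max (g ω) (w ω)) - arctan (w ω) ∂μ ≤ 0) : g ≤ᵐ[μ] w := by
  have hnonneg : 0 ≤ᵐ[μ] fun ω => arctan (max (g ω) (w ω)) - arctan (w ω) :=
    ae_of_all _ fun ω => sub_nonneg.2 (arctan_strictMono.monotone (le_max_right _ _))
  have hzero := (integral_eq_zero_iff_of_nonneg_ae hnonneg
    ((integrable_arctan_comp (hg.sup hw)).sub (integrable_arctan_comp hw))).1
    (h.antisymm (integral_nonneg_of_ae hnonneg))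
  filter_upwards [hzero] with ω hω
  exact max_eq_right_iff.1 (arctan_injective (sub_eq_zero.1 hω))

/-- Maximising `∫ arctan (f i)` along a sequence `i n` yields the essential supremum
`⨆ n, f (i n)`: directedness bounds `∫ arctan (max (f k) (f (i n)))` by the supremum of these
integrals, which forces `f k ≤ ⨆ n, f (i n)` a.e. -/
theorem exists_measurable_isEssSupFam_of_directed [IsFiniteMeasure μ] (hm : m ≤ m0)
    (hf : ∀ i, P i → Measurable[m] (f i)) (hne : ∃ i, P i)
    (hdir : ∀ i j, P i → P j → ∃ k, P k ∧ ∀ᵐ ω ∂μ, max (f i ω) (f j ω) ≤ f k ω)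
    {v : Ω → ℝ} (hv : ∀ i, P i → f i ≤ᵐ[μ] v) :
    ∃ w : Ω → ℝ, Measurable[m] w ∧ IsEssSupFam μ P f w := by
  have hf₀ : ∀ i, P i → AEStronglyMeasurable (f i) μ := fun i hi =>
    ((hf i hi).mono hm le_rfl).aestronglyMeasurable
  set F : ι → ℝ := fun i => ∫ ω, arctan (f i ω) ∂μ
  have hbdd : BddAbove (F '' {i | P i}) := by
    refine ⟨∫ _, π / 2 ∂μ, forall_mem_image.2 fun i hi => ?_⟩
    exact integral_mono (integrable_arctan_comp (hf₀ i hi)) (integrable_const _)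
      fun ω => (arctan_lt_pi_div_two _).le
  obtain ⟨u, -, hu_lim, hu_mem⟩ :=
    exists_seq_tendsto_sSup ((show {i | P i}.Nonempty from hne).image F) hbdd
  set c := sSup (F '' {i | P i})
  choose i hiP hiF using hu_mem
  set w : Ω → ℝ := fun ω => ⨆ n, f (i n) ω
  have hw : Measurable[m] w := Measurable.iSup fun n => hf _ (hiP n)
  have hw₀ : AEStronglyMeasurable w μ := (hw.mono hm le_rfl).aestronglyMeasurable
  have hle_w : ∀ n, f (i n) ≤ᵐ[μ] w := fun n => by
    filter_upwards [ae_all_iff.2 fun n => hv _ (hiP n)] with ω hω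
    exact le_ciSup ⟨v ω, forall_mem_range.2 hω⟩ n
  refine ⟨w, hw, fun k hk => ?_, fun w' hw' => ?_⟩
  · refine ae_le_of_integral_arctan_max_sub_nonpos (hf₀ k hk) hw₀ ?_
    have hgap : ∀ n, ∫ ω, arctan (max (f k ω) (w ω)) - arctan (w ω) ∂μ ≤
        c - u n := fun n => by
      obtain ⟨j, hj, hkj⟩ := hdir k (i n) hk (hiP n)
      have hFj : ∫ ω, arctan (max (f k ω) (f (i n) ω)) ∂μ ≤ F j :=
        integral_mono_ae (integrable_arctan_comp ((hf₀ k hk).sup (hf₀ _ (hiP n))))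
          (integrable_arctan_comp (hf₀ j hj)) (hkj.mono fun ω hω => arctan_strictMono.monotone hω)
      calc _ ≤ _ := integral_arctan_max_sub_le (hf₀ k hk) hw₀ (hf₀ _ (hiP n)) (hle_w n)
        _ ≤ F j - F (i n) := sub_le_sub_right hFj _
        _ ≤ _ := by rw [hiF n]; exact sub_le_sub_right (le_csSup hbdd ⟨j, hj, rfl⟩) _
    have hlim : Tendsto (fun n => c - u n) atTop (𝓝 0) := by
      simpa only [sub_self] using (tendsto_const_nhds (x := c)).sub hu_lim
    exact ge_of_tendsto' hlim hgap
  · filter_upwards [ae_all_iff.2 fun n => hw' _ (hiP n)] with ω hω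
    exact ciSup_le hω

end EssSup

section StoppingTime

variable {m0 : MeasurableSpace Ω} {ι : Type*}

theorem MeasureTheory.IsStoppingTime.piecewise_of_measurableSet [Preorder ι]
    {𝒢 : Filtration ι m0} {τ η : Ω → WithTop ι} {s : Set Ω} [DecidablePred (· ∈ s)]
    (hτ : IsStoppingTime 𝒢 τ) (hη : IsStoppingTime 𝒢 η) (hsτ : MeasurableSet[hτ.measurableSpace] s)
    (hsη : MeasurableSet[hη.measurableSpace] s) : IsStoppingTime 𝒢 (s.piecewise τ η) := by
  intro n
  have : {ω | s.piecewise τ η ω ≤ n} = s ∩ {ω | τ ω ≤ n} ∪ sᶜ ∩ {ω | η ω ≤ n} := by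
    ext ω
    by_cases hω : ω ∈ s <;> simp [hω]
  rw [this]
  exact (hsτ.2 n).union ((MeasurableSet.compl hsη).2 n)

theorem MeasureTheory.condExp_stopping_time_ae_eq_restrict_eq_stopping_time [LinearOrder ι]
    [TopologicalSpace ι] [OrderTopology ι] [SecondCountableTopology ι] {μ : Measure Ω}
    [IsFiniteMeasure μ] {𝒢 : Filtration ι m0} {τ σ : Ω → WithTop ι} {f : Ω → ℝ}
    (hτ : IsStoppingTime 𝒢 τ) (hσ : IsStoppingTime 𝒢 σ) :
    μ[f | hτ.measurableSpace] =ᵐ[μ.restrict {ω | τ ω = σ ω}] μ[f | hσ.measurableSpace] := by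
  have hτσ := condExp_min_stopping_time_ae_eq_restrict_le (μ := μ) (f := f) hτ hσ
  have hστ := condExp_min_stopping_time_ae_eq_restrict_le (μ := μ) (f := f) hσ hτ
  rw [hτ.measurableSpace_min hσ] at hτσ
  rw [hσ.measurableSpace_min hτ, inf_comm] at hστ
  have hsub_le : {ω | τ ω = σ ω} ⊆ {ω | τ ω ≤ σ ω} := fun ω h => le_of_eq h
  have hsub_ge : {ω | τ ω = σ ω} ⊆ {ω | σ ω ≤ τ ω} := fun ω h => ge_of_eq h
  filter_upwards [ae_restrict_of_ae_restrict_of_subset hsub_le hτσ,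
    ae_restrict_of_ae_restrict_of_subset hsub_ge hστ] with ω h₁ h₂
  rw [← h₁, h₂]

end StoppingTime

theorem MeasureTheory.condExp_ae_eq_restrict_of_ae_eq_restrict {m m0 : MeasurableSpace Ω}
    {μ : Measure Ω} {s : Set Ω} {f g : Ω → ℝ} (hs : MeasurableSet[m] s) (hf : Integrable f μ)
    (hg : Integrable g μ) (hfg : f =ᵐ[μ.restrict s] g) : μ[f | m] =ᵐ[μ.restrict s] μ[g | m] := by
  have hdiff := condExp_ae_eq_restrict_zero (m := m) hs ((sub_ae_eq_zero _ _).2 hfg)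
  filter_upwards [hdiff, ae_restrict_of_ae (condExp_sub hf hg m)] with ω h₀ hsub
  rwa [Pi.zero_apply, hsub, Pi.sub_apply, sub_eq_zero] at h₀

section ValueFamily

variable {m0 : MeasurableSpace Ω} {μ : Measure Ω} {𝓕 : Filtration ℝ m0} {T : ℝ}
  {φ : (Ω → ℝ) → Ω → ℝ} {S S' θ θ' : Ω → ℝ}

theorem MemT0.max (hθ : MemT0 𝓕 T θ) (hS : MemT0 𝓕 T S) :
    MemT0 𝓕 T fun ω => max (θ ω) (S ω) := by
  refine ⟨?_, fun ω => ⟨(hθ.2 ω).1.trans (le_max_left _ _), max_le (hθ.2 ω).2 (hS.2 ω).2⟩⟩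
  simpa only [WithTop.coe_max] using hθ.1.max hS.1

theorem MemT0.piecewise {A : Set Ω} [DecidablePred (· ∈ A)] (hθ : MemT0 𝓕 T θ)
    (hθ' : MemT0 𝓕 T θ') (hS : MemT0 𝓕 T S) (hSθ : S ≤ θ) (hSθ' : S ≤ θ')
    (hA : MeasurableSet[hS.1.measurableSpace] A) : MemT0 𝓕 T (A.piecewise θ θ') := by
  refine ⟨?_, fun ω => ?_⟩
  · have h := hθ.1.piecewise_of_measurableSet hθ'.1
      (hS.1.measurableSpace_mono hθ.1 (fun ω => WithTop.coe_le_coe.2 (hSθ ω)) _ hA)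
      (hS.1.measurableSpace_mono hθ'.1 (fun ω => WithTop.coe_le_coe.2 (hSθ' ω)) _ hA)
    convert h using 1
    ext ω
    by_cases hω : ω ∈ A <;> simp [hω]
  · by_cases hω : ω ∈ A <;> simp [hω, hθ.2 ω, hθ'.2 ω]

theorem MemT0.measurableSet_eq (hS : MemT0 𝓕 T S) (hS' : MemT0 𝓕 T S') :
    MeasurableSet[hS.1.measurableSpace] {ω | S ω = S' ω} := by
  simpa only [WithTop.coe_inj] using hS.1.measurableSet_eq_stopping_time hS'.1

theorem Admissible.ae_eq_restrict (hφ : Admissible 𝓕 T μ φ) (hθ : MemT0 𝓕 T θ)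
    (hθ' : MemT0 𝓕 T θ') {B : Set Ω} (h : θ =ᵐ[μ.restrict B] θ') :
    φ θ =ᵐ[μ.restrict B] φ θ' := by
  filter_upwards [ae_restrict_of_ae (hφ.2 θ θ' hθ hθ'), h] with ω hφω hω using hφω hω

/-- Pasting `θ ∨ S` and `θ' ∨ S` along the `F_S`-set where the first conditional expectation is
larger; the maxima with `S` make `S ≤ θ` hold everywhere, so that this set lies in `F_θ`. -/
theorem Admissible.exists_condExp_max_le (hφ : Admissible 𝓕 T μ φ)
    (hφint : ∀ τ, MemT0 𝓕 T τ → Integrable (φ τ) μ) (hS : MemT0 𝓕 T S) (hθ : MemT0 𝓕 T θ)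
    (hθ' : MemT0 𝓕 T θ') (hSθ : S ≤ᵐ[μ] θ) (hSθ' : S ≤ᵐ[μ] θ') :
    ∃ κ, (MemT0 𝓕 T κ ∧ S ≤ᵐ[μ] κ) ∧ ∀ᵐ ω ∂μ,
      max (μ[φ θ | hS.1.measurableSpace] ω) (μ[φ θ' | hS.1.measurableSpace] ω) ≤
        μ[φ κ | hS.1.measurableSpace] ω := by
  classical
  set A := {ω | μ[φ θ' | hS.1.measurableSpace] ω ≤ μ[φ θ | hS.1.measurableSpace] ω}
  have hA : MeasurableSet[hS.1.measurableSpace] A :=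
    stronglyMeasurable_condExp.measurableSet_le stronglyMeasurable_condExp
  have hA₀ : MeasurableSet A := hS.1.measurableSpace_le _ hA
  set κ := A.piecewise (fun ω => max (θ ω) (S ω)) (fun ω => max (θ' ω) (S ω))
  have hκ : MemT0 𝓕 T κ := (hθ.max hS).piecewise (hθ'.max hS) hS
    (fun ω => le_max_right _ _) (fun ω => le_max_right _ _) hA
  have hκθ : κ =ᵐ[μ.restrict A] θ := by
    filter_upwards [ae_restrict_mem hA₀, ae_restrict_of_ae hSθ] with ω hω hSω
    simp [κ, hω, hSω]
  have hκθ' : κ =ᵐ[μ.restrict Aᶜ] θ' := by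
    filter_upwards [ae_restrict_mem hA₀.compl, ae_restrict_of_ae hSθ'] with ω hω hSω
    simp [κ, piecewise_eq_of_notMem _ _ _ hω, hSω]
  have h₁ := condExp_ae_eq_restrict_of_ae_eq_restrict hA (hφint κ hκ) (hφint θ hθ)
    (hφ.ae_eq_restrict hκ hθ hκθ)
  have h₂ := condExp_ae_eq_restrict_of_ae_eq_restrict hA.compl (hφint κ hκ) (hφint θ' hθ')
    (hφ.ae_eq_restrict hκ hθ' hκθ')
  refine ⟨κ, ⟨hκ, ae_of_all _ fun ω => ?_⟩, ae_of_ae_restrict_of_ae_restrict_compl A ?_ ?_⟩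
  · by_cases hω : ω ∈ A <;> simp [κ, hω]
  · filter_upwards [h₁, ae_restrict_mem hA₀] with ω h hω
    rw [h, max_eq_left hω]
  · filter_upwards [h₂, ae_restrict_mem hA₀.compl] with ω h hω
    rw [mem_compl_iff, mem_ofPred_eq, not_le] at hω
    rw [h, max_eq_right hω.le]

theorem Admissible.isEssSupFam_condExp_ae_le_of_eq [IsFiniteMeasure μ] (hφ : Admissible 𝓕 T μ φ)
    (hφint : ∀ τ, MemT0 𝓕 T τ → Integrable (φ τ) μ) (hS : MemT0 𝓕 T S) (hS' : MemT0 𝓕 T S')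
    {v v' : Ω → ℝ}
    (hv : IsEssSupFam μ (fun θ => MemT0 𝓕 T θ ∧ S ≤ᵐ[μ] θ)
      (fun θ => μ[φ θ | hS.1.measurableSpace]) v)
    (hv' : IsEssSupFam μ (fun θ => MemT0 𝓕 T θ ∧ S' ≤ᵐ[μ] θ)
      (fun θ => μ[φ θ | hS'.1.measurableSpace]) v') :
    ∀ᵐ ω ∂μ, S ω = S' ω → v ω ≤ v' ω := by
  classical
  set B := {ω | S ω = S' ω}
  have hB : MeasurableSet[hS.1.measurableSpace] B := hS.measurableSet_eq hS'
  have hB₀ : MeasurableSet B := hS.1.measurableSpace_le _ hB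
  suffices v ≤ᵐ[μ] B.piecewise v' v by
    filter_upwards [this] with ω h hω
    rwa [piecewise_eq_of_mem _ _ _ (show ω ∈ B from hω)] at h
  refine hv.2 _ fun θ ⟨hθ, hSθ⟩ => ae_of_ae_restrict_of_ae_restrict_compl B ?_ ?_
  · set θ₁ := fun ω => max (θ ω) (S' ω)
    have hθ₁ : MemT0 𝓕 T θ₁ := hθ.max hS'
    have hθθ₁ : θ =ᵐ[μ.restrict B] θ₁ := by
      filter_upwards [ae_restrict_mem hB₀, ae_restrict_of_ae hSθ] with ω (hω : S ω = S' ω) hSω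
      exact (max_eq_left (hω ▸ hSω)).symm
    have h₁ := condExp_ae_eq_restrict_of_ae_eq_restrict hB (hφint θ hθ) (hφint θ₁ hθ₁)
      (hφ.ae_eq_restrict hθ hθ₁ hθθ₁)
    have h₂ : μ[φ θ₁ | hS.1.measurableSpace] =ᵐ[μ.restrict B] μ[φ θ₁ | hS'.1.measurableSpace] := by
      simpa only [WithTop.coe_inj] using
        condExp_stopping_time_ae_eq_restrict_eq_stopping_time (f := φ θ₁) hS.1 hS'.1
    have h₃ := ae_restrict_of_ae (μ := μ) (s := B)
      (hv'.1 θ₁ ⟨hθ₁, ae_of_all _ fun ω => le_max_right _ _⟩)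
    filter_upwards [h₁, h₂, h₃, ae_restrict_mem hB₀] with ω e₁ e₂ e₃ hω
    rw [piecewise_eq_of_mem _ _ _ hω, e₁, e₂]
    exact e₃
  · filter_upwards [ae_restrict_of_ae (hv.1 θ ⟨hθ, hSθ⟩), ae_restrict_mem hB₀.compl] with ω h hω
    rwa [piecewise_eq_of_notMem _ _ _ hω]

end ValueFamily

theorem value_family_admissible_general
    {m0 : MeasurableSpace Ω} (μ : Measure Ω) [IsProbabilityMeasure μ]
    (𝓕 : Filtration ℝ m0) (T : ℝ)
    (φ : (Ω → ℝ) → Ω → ℝ)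
    (hφ : Admissible 𝓕 T μ φ)
    (hφint : ∀ τ, MemT0 𝓕 T τ → Integrable (φ τ) μ)
    (V : (Ω → ℝ) → Ω → ℝ)
    (hV : ∀ S (hS : MemT0 𝓕 T S),
      IsEssSupFam μ (fun θ => MemT0 𝓕 T θ ∧ S ≤ᵐ[μ] θ)
        (fun θ => μ[φ θ | hS.1.measurableSpace]) (V S)) :
    AdmissibleAE 𝓕 T μ V := by
  refine ⟨fun S hS => ⟨?_, ?_⟩, fun S S' hS hS' => ?_⟩
  · filter_upwards [condExp_nonneg (m := hS.1.measurableSpace) (ae_of_all μ (hφ.1 S hS).2),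
      (hV S hS).1 S ⟨hS, EventuallyLE.rfl⟩] with ω h₀ h₁ using h₀.trans h₁
  · obtain ⟨w, hw, hw_sup⟩ := exists_measurable_isEssSupFam_of_directed
      hS.1.measurableSpace_le (fun θ _ => stronglyMeasurable_condExp.measurable)
      ⟨S, hS, EventuallyLE.rfl⟩
      (fun θ θ' hθ hθ' => hφ.exists_condExp_max_le hφint hS hθ.1 hθ'.1 hθ.2 hθ'.2) (hV S hS).1
    exact ⟨w, hw, (hV S hS).ae_eq hw_sup⟩
  · filter_upwards [hφ.isEssSupFam_condExp_ae_le_of_eq hφint hS hS' (hV S hS) (hV S' hS'),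
      hφ.isEssSupFam_condExp_ae_le_of_eq hφint hS' hS (hV S' hS') (hV S hS)] with ω h h' hω
    exact (h hω).antisymm (h' hω.symm)

/-- If `{φ(θ), θ ∈ T_0}` is an admissible family of nonnegative
random variables and `v(S) = ess sup_{θ ∈ T_S} E[φ(θ) | F_S]`, then the family
`{v(S), S ∈ T_0}` is itself admissible: `v(S)` is a nonnegative `F_S`-measurable
random variable (up to a.s. equality), and `v(S) = v(S')` a.s. on `{S = S'}`. -/
theorem value_family_admissible
    {m0 : MeasurableSpace Ω} (μ : Measure Ω) [IsProbabilityMeasure μ]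
    (𝓕 : Filtration ℝ m0) (T : ℝ) (hT : 0 ≤ T)
    (hFright : ∀ t : ℝ, 𝓕 t = ⨅ s ∈ Set.Ioi t, 𝓕 s)
    (hFnull : ∀ A : Set Ω, μ A = 0 → MeasurableSet[𝓕 0] A)
    (φ : (Ω → ℝ) → Ω → ℝ)
    (hφ : Admissible 𝓕 T μ φ)
    (hφint : ∀ τ, MemT0 𝓕 T τ → Integrable (φ τ) μ)
    (V : (Ω → ℝ) → Ω → ℝ)
    (hV : ∀ S (hS : MemT0 𝓕 T S),
      IsEssSupFam μ (fun θ => MemT0 𝓕 T θ ∧ S ≤ᵐ[μ] θ)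
        (fun θ => μ[φ θ | hS.1.measurableSpace]) (V S)) :
    AdmissibleAE 𝓕 T μ V :=
  value_family_admissible_general μ 𝓕 T φ hφ hφint V hV
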